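/- Let m(1), …, m(k) be pairwise relatively prime integers, each exceeding 1, and let m = ∏ m(i). Then the addition map ⊕ᵢ ℤ[1/m(i)] → ℤ[1/m], (a₁, …, a_k) ↦ ∑ aᵢ, is surjective, and its kernel is a free abelian group of rank k − 1. -/

import Mathlib

/-!
ℤ[1/n] consists of the rationals whose denominator divides a power of `n`. Surjectivity is a
partial fraction decomposition: for coprime `a`, `b`, Bézout for `a ^ j` and `b ^ j` splits
`1 / (a * b) ^ j` as `v / a ^ j + u / b ^ j`, so ℤ[1/ab] = ℤ[1/a] + ℤ[1/b]. In the kernel each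
entry `xᵢ = -∑_{l ≠ i} x_l` lies in both ℤ[1/m(i)] and ℤ[1/∏_{l ≠ i} m(l)], so its denominator
divides powers of two coprime numbers and `xᵢ ∈ ℤ`. Hence the kernel is the group of integer
tuples with zero sum, which is ℤ^(k-1) by forgetting the first coordinate.
-/

/-- The subgroup ℤ[1/n] of ℚ. -/
def zOneOver (n : ℕ) : AddSubgroup ℚ :=
  AddSubgroup.closure {x : ℚ | ∃ j : ℕ, x = 1 / (n : ℚ) ^ j}

theorem exists_den_dvd_pow_of_mem_zOneOver {n : ℕ} {x : ℚ} (hx : x ∈ zOneOver n) :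
    ∃ j, x.den ∣ n ^ j := by
  induction hx using AddSubgroup.closure_induction with
  | mem x hx =>
    obtain ⟨j, rfl⟩ := hx
    refine ⟨j, ?_⟩
    rw [one_div, ← Nat.cast_pow, Rat.inv_natCast_den]
    split_ifs <;> simp
  | zero => exact ⟨0, by simp⟩
  | add x y _ _ hx hy =>
    obtain ⟨j, hj⟩ := hx
    obtain ⟨l, hl⟩ := hy
    exact ⟨j + l, (Rat.add_den_dvd x y).trans (pow_add n j l ▸ mul_dvd_mul hj hl)⟩
  | neg x _ hx => simpa only [Rat.neg_den] using hx

theorem one_div_pow_mem_zOneOver (n j : ℕ) : 1 / (n : ℚ) ^ j ∈ zOneOver n :=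
  AddSubgroup.subset_closure ⟨j, rfl⟩

theorem intCast_mem_zOneOver (n : ℕ) (a : ℤ) : (a : ℚ) ∈ zOneOver n := by
  simpa using AddSubgroup.zsmul_mem _ (one_div_pow_mem_zOneOver n 0) a

theorem mem_zOneOver_of_den_dvd_pow {n j : ℕ} {x : ℚ} (hn : n ≠ 0) (h : x.den ∣ n ^ j) :
    x ∈ zOneOver n := by
  obtain ⟨c, hc⟩ := h
  have hx : x = (x.num * c : ℤ) • (1 / (n : ℚ) ^ j) := by
    have : (n : ℚ) ^ j = x.den * c := by exact_mod_cast hc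
    have hc0 : (c : ℚ) ≠ 0 := by rintro h; simp [h, hn] at this
    rw [zsmul_eq_mul, this]
    push_cast
    calc x = x.num / x.den := (Rat.num_div_den x).symm
      _ = x.num * c * (1 / (x.den * c)) := by field_simp
  exact hx ▸ AddSubgroup.zsmul_mem _ (one_div_pow_mem_zOneOver n j) _

theorem zOneOver_mono {a b : ℕ} (hb : b ≠ 0) (hab : a ∣ b) : zOneOver a ≤ zOneOver b := by
  intro x hx
  obtain ⟨j, hj⟩ := exists_den_dvd_pow_of_mem_zOneOver hx
  exact mem_zOneOver_of_den_dvd_pow hb (hj.trans (pow_dvd_pow_of_dvd hab j))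

theorem den_eq_one_of_mem_zOneOver_of_coprime {a b : ℕ} (hab : a.Coprime b) {x : ℚ}
    (ha : x ∈ zOneOver a) (hb : x ∈ zOneOver b) : x.den = 1 := by
  obtain ⟨j, hj⟩ := exists_den_dvd_pow_of_mem_zOneOver ha
  obtain ⟨l, hl⟩ := exists_den_dvd_pow_of_mem_zOneOver hb
  exact Nat.eq_one_of_dvd_coprimes (hab.pow j l) hj hl

theorem zOneOver_mul_of_coprime {a b : ℕ} (ha : a ≠ 0) (hb : b ≠ 0) (hab : a.Coprime b) :
    zOneOver (a * b) = zOneOver a ⊔ zOneOver b := by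
  refine le_antisymm ?_ (sup_le (zOneOver_mono (mul_ne_zero ha hb) (dvd_mul_right a b))
    (zOneOver_mono (mul_ne_zero ha hb) (dvd_mul_left b a)))
  rw [zOneOver, AddSubgroup.closure_le]
  rintro _ ⟨j, rfl⟩
  obtain ⟨u, v, huv⟩ := Nat.isCoprime_iff_coprime.2 (hab.pow j j)
  have hsplit : 1 / ((a * b : ℕ) : ℚ) ^ j = v • (1 / (a : ℚ) ^ j) + u • (1 / (b : ℚ) ^ j) := by
    have : (u : ℚ) * a ^ j + v * b ^ j = 1 := by exact_mod_cast huv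
    simp only [zsmul_eq_mul]
    field_simp
    push_cast
    linear_combination (-((a : ℚ) * b) ^ j) * this
  rw [SetLike.mem_coe, hsplit]
  exact AddSubgroup.add_mem _
    (AddSubgroup.mem_sup_left (AddSubgroup.zsmul_mem _ (one_div_pow_mem_zOneOver _ j) _))
    (AddSubgroup.mem_sup_right (AddSubgroup.zsmul_mem _ (one_div_pow_mem_zOneOver _ j) _))

theorem zOneOver_prod_of_pairwise_coprime {ι : Type*} {m : ι → ℕ} {s : Finset ι}
    (hs : s.Nonempty) (hm : ∀ i ∈ s, m i ≠ 0)
    (hcop : (s : Set ι).Pairwise fun i j => (m i).Coprime (m j)) :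
    zOneOver (∏ i ∈ s, m i) = s.sup fun i => zOneOver (m i) := by
  induction hs using Finset.Nonempty.cons_induction with
  | singleton a => simp
  | cons a s ha hs ih =>
    simp only [Finset.coe_cons, Set.pairwise_insert] at hcop
    have hprod : ∏ i ∈ s, m i ≠ 0 := Finset.prod_ne_zero_iff.2 fun i hi => hm i (by simp [hi])
    rw [Finset.prod_cons, zOneOver_mul_of_coprime (hm a (by simp)) hprod
      (Nat.Coprime.prod_right fun i hi => (hcop.2 i hi (by rintro rfl; exact ha hi)).1),
      ih (fun i hi => hm i (by simp [hi])) hcop.1, Finset.sup_cons]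

section SumMap

variable {ι : Type*} [Fintype ι] (m : ι → ℕ)

def zOneOverSum : (∀ i, zOneOver (m i)) →+ ℚ :=
  ∑ i, (zOneOver (m i)).subtype.comp (Pi.evalAddMonoidHom _ i)

@[simp]
theorem zOneOverSum_apply (x : ∀ i, zOneOver (m i)) : zOneOverSum m x = ∑ i, (x i : ℚ) := by
  simp [zOneOverSum]

theorem zOneOver_le_range_zOneOverSum [DecidableEq ι] (i : ι) :
    zOneOver (m i) ≤ (zOneOverSum m).range := by
  intro x hx
  refine ⟨Pi.single i ⟨x, hx⟩, ?_⟩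
  rw [zOneOverSum_apply, Finset.sum_eq_single i (fun j _ hj => by simp [hj]) (by simp)]
  simp

theorem range_zOneOverSum [Nonempty ι] (hm : ∀ i, m i ≠ 0)
    (hcop : Pairwise fun i j => (m i).Coprime (m j)) :
    (zOneOverSum m).range = zOneOver (∏ i, m i) := by
  classical
  refine le_antisymm ?_ ?_
  · rintro _ ⟨x, rfl⟩
    rw [zOneOverSum_apply]
    exact AddSubgroup.sum_mem _ fun i _ =>
      zOneOver_mono (Finset.prod_ne_zero_iff.2 fun j _ => hm j)
        (Finset.dvd_prod_of_mem m (Finset.mem_univ i)) (x i).2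
  · rw [zOneOver_prod_of_pairwise_coprime Finset.univ_nonempty (fun i _ => hm i)
      (hcop.set_pairwise _)]
    exact Finset.sup_le fun i _ => zOneOver_le_range_zOneOverSum m i

end SumMap

theorem den_eq_one_of_mem_ker_zOneOverSum {ι : Type*} [Fintype ι] [DecidableEq ι] {m : ι → ℕ}
    (hm : ∀ i, m i ≠ 0) (hcop : Pairwise fun i j => (m i).Coprime (m j))
    {x : ∀ i, zOneOver (m i)} (hx : x ∈ (zOneOverSum m).ker) (i : ι) : (x i : ℚ).den = 1 := by
  let P := ∏ j ∈ Finset.univ.erase i, m j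
  have hxi : (x i : ℚ) = -∑ j ∈ Finset.univ.erase i, (x j : ℚ) := by
    rw [AddMonoidHom.mem_ker, zOneOverSum_apply,
      ← Finset.add_sum_erase _ _ (Finset.mem_univ i)] at hx
    linear_combination hx
  have hP : (x i : ℚ) ∈ zOneOver P := by
    rw [hxi]
    exact neg_mem (AddSubgroup.sum_mem _ fun j hj =>
      zOneOver_mono (Finset.prod_ne_zero_iff.2 fun l _ => hm l)
        (Finset.dvd_prod_of_mem m hj) (x j).2)
  have hcopP : (m i).Coprime P :=
    Nat.Coprime.prod_right fun j hj => hcop (Finset.ne_of_mem_erase hj).symm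
  exact den_eq_one_of_mem_zOneOver_of_coprime hcopP (x i).2 hP

def coordSum (ι A : Type*) [Fintype ι] [AddCommMonoid A] : (ι → A) →+ A :=
  ∑ i, Pi.evalAddMonoidHom (fun _ => A) i

@[simp]
theorem coordSum_apply {ι A : Type*} [Fintype ι] [AddCommMonoid A] (v : ι → A) :
    coordSum ι A v = ∑ i, v i := by
  simp [coordSum]

def coordSumKerEquiv (A : Type*) [AddCommGroup A] (n : ℕ) :
    (coordSum (Fin (n + 1)) A).ker ≃+ (Fin n → A) where
  toFun v := Fin.tail v.1
  invFun w := ⟨Fin.cons (-∑ i, w i) w, by simp [Fin.sum_univ_succ]⟩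
  left_inv v := by
    have hv := v.2
    rw [AddMonoidHom.mem_ker, coordSum_apply, Fin.sum_univ_succ] at hv
    ext : 1
    dsimp only
    have h0 : -∑ i, Fin.tail v.1 i = v.1 0 := (eq_neg_of_add_eq_zero_left hv).symm
    rw [h0, Fin.cons_self_tail]
  right_inv w := Fin.tail_cons _ _
  map_add' _ _ := rfl

section IntegralPoints

variable {ι : Type*} (m : ι → ℕ)

def intCastPi : (ι → ℤ) →+ ∀ i, zOneOver (m i) :=
  AddMonoidHom.pi fun i =>
    ((Int.castAddHom ℚ).codRestrict _ (intCast_mem_zOneOver (m i))).comp (Pi.evalAddMonoidHom _ i)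

@[simp]
theorem coe_intCastPi_apply (v : ι → ℤ) (i : ι) : (intCastPi m v i : ℚ) = v i := rfl

theorem intCastPi_injective : Function.Injective (intCastPi m) := fun v w h =>
  funext fun i => by simpa using congrArg (fun x => (x i : ℚ)) h

theorem ker_zOneOverSum [Fintype ι] [DecidableEq ι] (hm : ∀ i, m i ≠ 0)
    (hcop : Pairwise fun i j => (m i).Coprime (m j)) :
    (zOneOverSum m).ker = (coordSum ι ℤ).ker.map (intCastPi m) := by
  refine le_antisymm (fun x hx => ?_) ?_
  · have hden := den_eq_one_of_mem_ker_zOneOverSum hm hcop hx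
    have hx' : intCastPi m (fun i => (x i : ℚ).num) = x :=
      funext fun i => Subtype.ext ((Rat.den_eq_one_iff _).1 (hden i))
    refine ⟨_, AddMonoidHom.mem_ker.2 ?_, hx'⟩
    rw [AddMonoidHom.mem_ker, ← hx', zOneOverSum_apply] at hx
    simp only [coe_intCastPi_apply] at hx
    rw [coordSum_apply]
    exact_mod_cast hx
  · rw [AddSubgroup.map_le_iff_le_comap, AddMonoidHom.comap_ker]
    intro v hv
    rw [AddMonoidHom.mem_ker] at hv ⊢
    rw [coordSum_apply] at hv
    simp [← Int.cast_sum, hv]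

end IntegralPoints

/-- for pairwise coprime integers m(1),…,m(k) > 1 with product m, the
addition map ⊕ᵢ ℤ[1/m(i)] → ℤ[1/m] is surjective with kernel free abelian of
rank k − 1. -/
theorem stmt16 (k : ℕ) (hk : 0 < k) (m : Fin k → ℕ) (hm : ∀ i, 1 < m i)
    (hcop : ∀ i j, i ≠ j → Nat.Coprime (m i) (m j))
    (φ : (∀ i, zOneOver (m i)) →+ ℚ)
    (hφ : ∀ x, φ x = ∑ i, ((x i : ℚ))) :
    φ.range = zOneOver (∏ i, m i) ∧ Nonempty (φ.ker ≃+ (Fin (k - 1) → ℤ)) := by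
  obtain ⟨n, rfl⟩ : ∃ n, k = n + 1 := Nat.exists_eq_add_one.2 hk
  obtain rfl : φ = zOneOverSum m := AddMonoidHom.ext fun x => by rw [hφ, zOneOverSum_apply]
  have hm0 : ∀ i, m i ≠ 0 := fun i => (zero_lt_one.trans (hm i)).ne'
  have hcop' : Pairwise fun i j => (m i).Coprime (m j) := hcop
  exact ⟨range_zOneOverSum m hm0 hcop',
    ⟨(AddEquiv.addSubgroupCongr (ker_zOneOverSum m hm0 hcop')).trans
      (((coordSum _ ℤ).ker.equivMapOfInjective _ (intCastPi_injective m)).symm.trans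
        (coordSumKerEquiv ℤ n))⟩⟩
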